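/- (Operator perturbation of 𝒯_K.) Suppose K and K′ are both stabilizing gains (ρ(A−BK) < 1 and ρ(A−BK′) < 1) and ‖𝒯_K‖ · ‖ℱ_K − ℱ_{K′}‖ ≤ 1/2. Then for every symmetric matrix Σ ∈ ℝ^{d×d}, ‖(𝒯_K − 𝒯_{K′})(Σ)‖ ≤ 2‖𝒯_K‖ · ‖ℱ_K − ℱ_{K′}‖ · ‖𝒯_K(Σ)‖ ≤ 2‖𝒯_K‖² · ‖ℱ_K − ℱ_{K′}‖ · ‖Σ‖. -/

import Mathlib

open Matrix

noncomputable section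

/-- Spectral radius of a real square matrix: the supremum of the absolute values of its
complex eigenvalues. -/
def specRad {d : ℕ} (M : Matrix (Fin d) (Fin d) ℝ) : ℝ :=
  ⨆ μ : spectrum ℂ (M.map (algebraMap ℝ ℂ)), ‖(μ : ℂ)‖

/-- `Aᵀ * A` is Hermitian (restored: removed from Mathlib). -/
theorem Matrix.isHermitian_transpose_mul_self {m n : Type*} [Fintype m] {α : Type*}
    [CommSemiring α] [StarRing α] [TrivialStar α] (A : Matrix m n α) :
    (Aᵀ * A).IsHermitian := by
  simpa using Matrix.isHermitian_conjTranspose_mul_self A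

/-- Minimum singular value of a real matrix. -/
def sigmaMin {m n : ℕ} (M : Matrix (Fin m) (Fin n) ℝ) : ℝ :=
  Real.sqrt (⨅ i, (Matrix.isHermitian_transpose_mul_self M).eigenvalues i)

/-- Spectral norm (maximum singular value) of a real matrix. -/
def specNorm {m n : ℕ} (M : Matrix (Fin m) (Fin n) ℝ) : ℝ :=
  Real.sqrt (⨆ i, (Matrix.isHermitian_transpose_mul_self M).eigenvalues i)

/-- Frobenius norm of a real matrix. -/
def frobNorm {m n : ℕ} (M : Matrix (Fin m) (Fin n) ℝ) : ℝ :=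
  Real.sqrt (∑ i, ∑ j, (M i j) ^ 2)

/-- For a stabilizing gain `K`, the unique positive semidefinite solution `P_K` of
`P = Q + Kᵀ R K + (A - B K)ᵀ P (A - B K)`, given by its convergent series representation. -/
def Pmat {d k : ℕ} (A : Matrix (Fin d) (Fin d) ℝ) (B : Matrix (Fin d) (Fin k) ℝ)
    (Q : Matrix (Fin d) (Fin d) ℝ) (R : Matrix (Fin k) (Fin k) ℝ)
    (K : Matrix (Fin k) (Fin d) ℝ) : Matrix (Fin d) (Fin d) ℝ :=
  ∑' t : ℕ, ((A - B * K)ᵀ) ^ t * (Q + Kᵀ * R * K) * (A - B * K) ^ t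

/-- The state correlation matrix `Σ_K = ∑_{t} (A-BK)^t Σ₀ ((A-BK)ᵀ)^t`. -/
def SigmaMat {d k : ℕ} (A : Matrix (Fin d) (Fin d) ℝ) (B : Matrix (Fin d) (Fin k) ℝ)
    (Sig0 : Matrix (Fin d) (Fin d) ℝ) (K : Matrix (Fin k) (Fin d) ℝ) :
    Matrix (Fin d) (Fin d) ℝ :=
  ∑' t : ℕ, (A - B * K) ^ t * Sig0 * ((A - B * K)ᵀ) ^ t

/-- The LQR cost `C(K) = Tr(Σ₀ P_K)`. -/
def Cost {d k : ℕ} (A : Matrix (Fin d) (Fin d) ℝ) (B : Matrix (Fin d) (Fin k) ℝ)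
    (Q : Matrix (Fin d) (Fin d) ℝ) (R : Matrix (Fin k) (Fin k) ℝ)
    (Sig0 : Matrix (Fin d) (Fin d) ℝ) (K : Matrix (Fin k) (Fin d) ℝ) : ℝ :=
  (Sig0 * Pmat A B Q R K).trace

/-- `E_K = (R + Bᵀ P_K B) K - Bᵀ P_K A`. -/
def Emat {d k : ℕ} (A : Matrix (Fin d) (Fin d) ℝ) (B : Matrix (Fin d) (Fin k) ℝ)
    (Q : Matrix (Fin d) (Fin d) ℝ) (R : Matrix (Fin k) (Fin k) ℝ)
    (K : Matrix (Fin k) (Fin d) ℝ) : Matrix (Fin k) (Fin d) ℝ :=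
  (R + Bᵀ * Pmat A B Q R K * B) * K - Bᵀ * Pmat A B Q R K * A

/-- The operator `𝒯_K(X) = ∑_t (A-BK)^t X ((A-BK)ᵀ)^t` on (symmetric) matrices. -/
def TK {d k : ℕ} (A : Matrix (Fin d) (Fin d) ℝ) (B : Matrix (Fin d) (Fin k) ℝ)
    (K : Matrix (Fin k) (Fin d) ℝ) (X : Matrix (Fin d) (Fin d) ℝ) :
    Matrix (Fin d) (Fin d) ℝ :=
  ∑' t : ℕ, (A - B * K) ^ t * X * ((A - B * K)ᵀ) ^ t

/-- The operator `ℱ_K(X) = (A-BK) X (A-BK)ᵀ` on (symmetric) matrices. -/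
def FK {d k : ℕ} (A : Matrix (Fin d) (Fin d) ℝ) (B : Matrix (Fin d) (Fin k) ℝ)
    (K : Matrix (Fin k) (Fin d) ℝ) (X : Matrix (Fin d) (Fin d) ℝ) :
    Matrix (Fin d) (Fin d) ℝ :=
  (A - B * K) * X * (A - B * K)ᵀ

/-- The norm of a linear operator on symmetric matrices induced by the spectral norm. -/
def opNormSym {d : ℕ} (L : Matrix (Fin d) (Fin d) ℝ → Matrix (Fin d) (Fin d) ℝ) : ℝ :=
  sSup {r : ℝ | ∃ X : Matrix (Fin d) (Fin d) ℝ,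
    Xᵀ = X ∧ X ≠ 0 ∧ r = specNorm (L X) / specNorm X}


section Helpers
open scoped Matrix.Norms.L2Operator NNReal ENNReal

lemma l2_opNorm_diagonal_le {n : ℕ} (v : Fin n → ℝ) {c : ℝ} (hc : 0 ≤ c)
    (h : ∀ i, |v i| ≤ c) : ‖diagonal v‖ ≤ c := by
  rw [Matrix.l2_opNorm_def]
  refine ContinuousLinearMap.opNorm_le_bound _ hc fun x => ?_
  rw [LinearEquiv.trans_apply]
  rw [show ((Matrix.toEuclideanLin (diagonal v)).toContinuousLinearMap : _) x
      = Matrix.toEuclideanLin (diagonal v) x from rfl]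
  rw [Matrix.toEuclideanLin_apply]
  rw [EuclideanSpace.norm_eq, EuclideanSpace.norm_eq x]
  rw [show c * Real.sqrt (∑ i, ‖x i‖ ^ 2) = Real.sqrt (c ^ 2 * ∑ i, ‖x i‖ ^ 2) by
    rw [Real.sqrt_mul (sq_nonneg c), Real.sqrt_sq hc]]
  apply Real.sqrt_le_sqrt
  rw [Finset.mul_sum]
  apply Finset.sum_le_sum
  intro i _
  have : ((WithLp.equiv 2 _).symm (diagonal v *ᵥ (WithLp.equiv 2 _) x) : EuclideanSpace ℝ (Fin n)) i
      = v i * x i := by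
    simp [Matrix.mulVec_diagonal]
  rw [show (WithLp.toLp 2 (diagonal v *ᵥ x.ofLp)).ofLp i = v i * x i by
    simp [Matrix.mulVec_diagonal]]
  rw [Real.norm_eq_abs, Real.norm_eq_abs, abs_mul, mul_pow]
  apply mul_le_mul_of_nonneg_right _ (sq_nonneg _)
  exact pow_le_pow_left₀ (abs_nonneg _) (h i) 2

lemma abs_eigenvalue_le_norm {n : ℕ} (H : Matrix (Fin n) (Fin n) ℝ) (hH : H.IsHermitian)
    (i : Fin n) : |hH.eigenvalues i| ≤ ‖H‖ := by
  have hv : ‖hH.eigenvectorBasis i‖ = 1 := hH.eigenvectorBasis.orthonormal.1 i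
  have hmv := Matrix.l2_opNorm_mulVec H (hH.eigenvectorBasis i)
  have key : (EuclideanSpace.equiv (Fin n) ℝ).symm (H *ᵥ hH.eigenvectorBasis i)
      = hH.eigenvalues i • hH.eigenvectorBasis i := by
    ext j; simpa using congrFun (hH.mulVec_eigenvectorBasis i) j
  rw [key, norm_smul, hv, mul_one] at hmv
  simpa using hmv


lemma norm_hermitian_eq_iSup {n : ℕ} [NeZero n] (H : Matrix (Fin n) (Fin n) ℝ)
    (hH : H.IsHermitian) (hpos : ∀ i, 0 ≤ hH.eigenvalues i) :
    ‖H‖ = ⨆ i, hH.eigenvalues i := by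
  have hfin : BddAbove (Set.range hH.eigenvalues) := Set.Finite.bddAbove (Set.finite_range _)
  have hub : ∀ i, hH.eigenvalues i ≤ ⨆ j, hH.eigenvalues j := fun i => le_ciSup hfin i
  have ht0 : 0 ≤ ⨆ i, hH.eigenvalues i := le_trans (hpos ⟨0, Nat.pos_of_ne_zero (NeZero.ne n)⟩)
    (hub _)
  apply le_antisymm
  · conv_lhs => rw [hH.spectral_theorem]
    have h1 : ‖(hH.eigenvectorUnitary : Matrix (Fin n) (Fin n) ℝ)‖ = 1 :=
      CStarRing.norm_coe_unitary hH.eigenvectorUnitary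
    have hDeq : (RCLike.ofReal ∘ hH.eigenvalues : Fin n → ℝ) = hH.eigenvalues := by
      funext i; simp [Function.comp, RCLike.ofReal]
    rw [hDeq]
    calc ‖(hH.eigenvectorUnitary : Matrix (Fin n) (Fin n) ℝ) * diagonal hH.eigenvalues *
          star (hH.eigenvectorUnitary : Matrix (Fin n) (Fin n) ℝ)‖
        ≤ ‖(hH.eigenvectorUnitary : Matrix (Fin n) (Fin n) ℝ) * diagonal hH.eigenvalues‖ *
          ‖star (hH.eigenvectorUnitary : Matrix (Fin n) (Fin n) ℝ)‖ := norm_mul_le _ _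
      _ ≤ ‖(hH.eigenvectorUnitary : Matrix (Fin n) (Fin n) ℝ)‖ * ‖diagonal hH.eigenvalues‖ *
          ‖star (hH.eigenvectorUnitary : Matrix (Fin n) (Fin n) ℝ)‖ := by
          apply mul_le_mul_of_nonneg_right (norm_mul_le _ _) (norm_nonneg _)
      _ ≤ 1 * (⨆ i, hH.eigenvalues i) * 1 := by
          have hsU : ‖star (hH.eigenvectorUnitary : Matrix (Fin n) (Fin n) ℝ)‖ = 1 := by
            rw [Matrix.star_eq_conjTranspose, Matrix.l2_opNorm_conjTranspose]; exact h1
          rw [h1, hsU]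
          apply mul_le_mul_of_nonneg_right _ zero_le_one
          apply mul_le_mul_of_nonneg_left _ zero_le_one
          apply l2_opNorm_diagonal_le _ ht0
          intro i
          rw [abs_of_nonneg (hpos i)]; exact hub i
      _ = ⨆ i, hH.eigenvalues i := by ring
  · apply ciSup_le
    intro i
    calc hH.eigenvalues i ≤ |hH.eigenvalues i| := le_abs_self _
    _ ≤ ‖H‖ := abs_eigenvalue_le_norm H hH i

lemma specNorm_eq_norm {m n : ℕ} (M : Matrix (Fin m) (Fin n) ℝ) : specNorm M = ‖M‖ := by
  rcases Nat.eq_zero_or_pos n with hn | hn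
  · subst hn
    have hM : M = 0 := by ext i j; exact absurd j.2 (by omega)
    rw [specNorm, iSup, Set.range_eq_empty, Real.sSup_empty, Real.sqrt_zero, hM, norm_zero]
  · have : NeZero n := ⟨by omega⟩
    have hH := Matrix.isHermitian_transpose_mul_self M
    have hpsd : (Mᴴ * M).PosSemidef := posSemidef_conjTranspose_mul_self M
    have hpos : ∀ i, 0 ≤ hH.eigenvalues i := hpsd.eigenvalues_nonneg
    have h1 : ‖Mᴴ * M‖ = ⨆ i, hH.eigenvalues i := norm_hermitian_eq_iSup _ hH hpos
    have h2 : ‖Mᴴ * M‖ = ‖M‖ * ‖M‖ := Matrix.l2_opNorm_conjTranspose_mul_self M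
    rw [specNorm, ← h1, h2]
    exact Real.sqrt_mul_self (norm_nonneg M)

lemma norm_le_norm_map_complex {d : ℕ} (P : Matrix (Fin d) (Fin d) ℝ) :
    ‖P‖ ≤ ‖P.map (algebraMap ℝ ℂ)‖ := by
  rw [Matrix.l2_opNorm_def]
  refine ContinuousLinearMap.opNorm_le_bound _ (norm_nonneg _) fun x => ?_
  set z : EuclideanSpace ℂ (Fin d) := (WithLp.equiv 2 _).symm (fun i => ((x i : ℝ) : ℂ)) with hz
  have hzn : ‖z‖ = ‖x‖ := by
    rw [EuclideanSpace.norm_eq, EuclideanSpace.norm_eq]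
    congr 1
    apply Finset.sum_congr rfl
    intro i _
    simp [hz]
  have hmv : (EuclideanSpace.equiv (Fin d) ℂ).symm (P.map (algebraMap ℝ ℂ) *ᵥ z)
      = (WithLp.equiv 2 _).symm (fun i => (((P *ᵥ (x : Fin d → ℝ)) i : ℝ) : ℂ)) := by
    ext i
    show (P.map (algebraMap ℝ ℂ) *ᵥ (fun j => ((x j : ℝ) : ℂ))) i
      = (((P *ᵥ (x : Fin d → ℝ)) i : ℝ) : ℂ)
    rw [show (fun j => ((x j : ℝ) : ℂ)) = (algebraMap ℝ ℂ) ∘ (x : Fin d → ℝ) by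
      funext j; simp [Complex.coe_algebraMap]]
    rw [← RingHom.map_mulVec]
    simp [Complex.coe_algebraMap]
  have hb := Matrix.l2_opNorm_mulVec (P.map (algebraMap ℝ ℂ)) z
  rw [hmv, hzn] at hb
  refine le_trans (le_of_eq ?_) hb
  rw [LinearEquiv.trans_apply]
  rw [show ((Matrix.toEuclideanLin P).toContinuousLinearMap : _) x
      = Matrix.toEuclideanLin P x from rfl]
  rw [Matrix.toEuclideanLin_apply]
  rw [EuclideanSpace.norm_eq, EuclideanSpace.norm_eq]
  congr 1
  apply Finset.sum_congr rfl
  intro i _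
  simp


lemma spectralRadius_lt_one {d : ℕ} [NeZero d] (M : Matrix (Fin d) (Fin d) ℝ)
    (h : specRad M < 1) : spectralRadius ℂ (M.map (algebraMap ℝ ℂ)) < 1 := by
  set a := M.map (algebraMap ℝ ℂ) with ha
  obtain ⟨R, hR⟩ := (spectrum.isBounded a : Bornology.IsBounded (spectrum ℂ a)).subset_closedBall 0
  have hKb : BddAbove (Set.range fun μ : spectrum ℂ a => ‖(μ : ℂ)‖) := by
    refine ⟨R, ?_⟩
    rintro x ⟨μ, rfl⟩
    have := hR μ.2
    simpa [Complex.dist_eq] using this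
  have hlt : ∀ z ∈ spectrum ℂ a, ‖z‖₊ < (1 : ℝ≥0) := by
    intro z hz
    have h1 : ‖z‖ ≤ specRad M := le_ciSup hKb (⟨z, hz⟩ : spectrum ℂ a)
    have : ‖z‖ < 1 := lt_of_le_of_lt h1 h
    simpa [← NNReal.coe_lt_coe] using this
  have := spectrum.spectralRadius_lt_of_forall_lt a hlt
  simpa using this

lemma exists_geom_bound {d : ℕ} (M : Matrix (Fin d) (Fin d) ℝ) (h : specRad M < 1) :
    ∃ C r : ℝ, 0 < C ∧ 0 ≤ r ∧ r < 1 ∧ ∀ t : ℕ, ‖M ^ t‖ ≤ C * r ^ t := by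
  rcases Nat.eq_zero_or_pos d with hd | hd
  · subst hd
    refine ⟨1, 0, one_pos, le_refl 0, zero_lt_one, fun t => ?_⟩
    have : (M ^ t : Matrix (Fin 0) (Fin 0) ℝ) = 0 := Subsingleton.elim _ _
    rw [this, norm_zero]
    positivity
  · have : NeZero d := ⟨by omega⟩
    set a := M.map (algebraMap ℝ ℂ) with ha
    have hρ : spectralRadius ℂ a < 1 := spectralRadius_lt_one M h
    obtain ⟨r, hr1, hr2⟩ := ENNReal.lt_iff_exists_nnreal_btwn.mp hρ
    have hrlt1 : (r : ℝ) < 1 := by exact_mod_cast hr2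
    have hr0 : (0:ℝ) ≤ r := r.2
    have htends := spectrum.pow_nnnorm_pow_one_div_tendsto_nhds_spectralRadius a
    have hev : ∀ᶠ n : ℕ in Filter.atTop, (‖a ^ n‖₊ : ℝ≥0∞) ^ (1 / n : ℝ) < (r : ℝ≥0∞) :=
      htends.eventually_lt_const hr1
    obtain ⟨N, hN⟩ := Filter.eventually_atTop.mp hev
    have hbound : ∀ n, N ≤ n → 1 ≤ n → ‖M ^ n‖ ≤ (r : ℝ) ^ n := by
      intro n hn h1n
      have hx := (hN n hn).le
      have hn0 : (n : ℝ) ≠ 0 := by exact_mod_cast Nat.one_le_iff_ne_zero.mp h1n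
      have hx2 : ((‖a ^ n‖₊ : ℝ≥0∞) ^ (1 / n : ℝ)) ^ (n : ℝ) ≤ (r : ℝ≥0∞) ^ (n : ℝ) :=
        ENNReal.rpow_le_rpow hx (Nat.cast_nonneg n)
      rw [← ENNReal.rpow_mul, one_div, inv_mul_cancel₀ hn0, ENNReal.rpow_one,
        ENNReal.rpow_natCast, ← ENNReal.coe_pow, ENNReal.coe_le_coe] at hx2
      have hc : ‖a ^ n‖ ≤ (r : ℝ) ^ n := by
        have := (NNReal.coe_le_coe.mpr hx2)
        simpa [coe_nnnorm] using this
      refine le_trans ?_ hc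
      have hmap : (M ^ n).map (algebraMap ℝ ℂ) = a ^ n := by
        rw [ha, ← RingHom.mapMatrix_apply, ← RingHom.mapMatrix_apply, map_pow]
      calc ‖M ^ n‖ ≤ ‖(M ^ n).map (algebraMap ℝ ℂ)‖ := norm_le_norm_map_complex _
        _ = ‖a ^ n‖ := by rw [hmap]
    set N' := max N 1 with hN'
    have hrpos : (0:ℝ) < r := by
      rcases eq_or_lt_of_le hr0 with heq | hlt
      · exfalso
        have : (r : ℝ≥0∞) = 0 := by
          rw [show r = (0:ℝ≥0) by exact_mod_cast heq.symm]; simp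
        rw [this] at hr1; exact (not_lt_bot hr1)
      · exact hlt
    refine ⟨1 + ∑ n ∈ Finset.range N', ‖M ^ n‖ / (r : ℝ) ^ n, (r : ℝ), ?_, hr0, hrlt1, ?_⟩
    · have : 0 ≤ ∑ n ∈ Finset.range N', ‖M ^ n‖ / (r : ℝ) ^ n :=
        Finset.sum_nonneg fun n _ => div_nonneg (norm_nonneg _) (by positivity)
      linarith
    · intro t
      rcases le_or_gt N' t with hts | hts
      · have := hbound t (le_trans (le_max_left _ _) hts) (le_trans (le_max_right _ _) hts)
        refine le_trans this ?_
        have h1C : 1 ≤ 1 + ∑ n ∈ Finset.range N', ‖M ^ n‖ / (r : ℝ) ^ n := by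
          have : 0 ≤ ∑ n ∈ Finset.range N', ‖M ^ n‖ / (r : ℝ) ^ n :=
            Finset.sum_nonneg fun n _ => div_nonneg (norm_nonneg _) (by positivity)
          linarith
        nlinarith [pow_pos hrpos t, pow_nonneg hr0 t]
      · have hmem : t ∈ Finset.range N' := Finset.mem_range.mpr hts
        have hterm : ‖M ^ t‖ / (r:ℝ) ^ t ≤ ∑ n ∈ Finset.range N', ‖M ^ n‖ / (r : ℝ) ^ n :=
          Finset.single_le_sum (fun n _ => div_nonneg (norm_nonneg _) (by positivity)) hmem
        have hpt : (0:ℝ) < (r:ℝ) ^ t := pow_pos hrpos t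
        rw [div_le_iff₀ hpt] at hterm
        nlinarith [pow_pos hrpos t]

lemma l2_opNorm_transpose (P : Matrix (Fin d) (Fin d) ℝ) : ‖Pᵀ‖ = ‖P‖ := by
  have : Pᵀ = Pᴴ := by ext i j; simp [conjTranspose_apply]
  rw [this, Matrix.l2_opNorm_conjTranspose]

section withL
variable {L : Matrix (Fin d) (Fin d) ℝ} {C r : ℝ}

lemma term_norm_le (hr0 : 0 ≤ r) (hL : ∀ t : ℕ, ‖L ^ t‖ ≤ C * r ^ t)
    (X : Matrix (Fin d) (Fin d) ℝ) (t : ℕ) :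
    ‖L ^ t * X * (Lᵀ) ^ t‖ ≤ C ^ 2 * ‖X‖ * (r ^ 2) ^ t := by
  have h1 : ‖L ^ t * X * (Lᵀ) ^ t‖ ≤ ‖L ^ t‖ * ‖X‖ * ‖(Lᵀ) ^ t‖ := by
    calc ‖L ^ t * X * (Lᵀ) ^ t‖ ≤ ‖L ^ t * X‖ * ‖(Lᵀ) ^ t‖ := norm_mul_le _ _
    _ ≤ ‖L ^ t‖ * ‖X‖ * ‖(Lᵀ) ^ t‖ :=
        mul_le_mul_of_nonneg_right (norm_mul_le _ _) (norm_nonneg _)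
  have h2 : ‖(Lᵀ) ^ t‖ = ‖L ^ t‖ := by
    rw [← Matrix.transpose_pow, l2_opNorm_transpose]
  rw [h2] at h1
  refine h1.trans ?_
  have hLt := hL t
  have hnn : (0:ℝ) ≤ ‖L ^ t‖ := norm_nonneg _
  have hX : (0:ℝ) ≤ ‖X‖ := norm_nonneg _
  have hCr : (0:ℝ) ≤ C * r ^ t := le_trans hnn hLt
  calc ‖L ^ t‖ * ‖X‖ * ‖L ^ t‖ ≤ (C * r ^ t) * ‖X‖ * (C * r ^ t) := by
        apply mul_le_mul (mul_le_mul_of_nonneg_right hLt hX) hLt hnn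
        positivity
  _ = C ^ 2 * ‖X‖ * (r ^ 2) ^ t := by ring

lemma summable_series (hr0 : 0 ≤ r) (hr1 : r < 1) (hL : ∀ t : ℕ, ‖L ^ t‖ ≤ C * r ^ t)
    (X : Matrix (Fin d) (Fin d) ℝ) :
    Summable (fun t : ℕ => L ^ t * X * (Lᵀ) ^ t) := by
  apply Summable.of_norm_bounded (g := fun t : ℕ => C ^ 2 * ‖X‖ * (r ^ 2) ^ t)
  · apply Summable.mul_left
    exact summable_geometric_of_lt_one (by positivity) (by nlinarith)
  · exact term_norm_le hr0 hL X

lemma tsum_norm_le (hr0 : 0 ≤ r) (hr1 : r < 1) (hL : ∀ t : ℕ, ‖L ^ t‖ ≤ C * r ^ t)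
    (X : Matrix (Fin d) (Fin d) ℝ) :
    ‖∑' t : ℕ, L ^ t * X * (Lᵀ) ^ t‖ ≤ (C ^ 2 * (1 - r ^ 2)⁻¹) * ‖X‖ := by
  have hsum : Summable (fun t : ℕ => ‖L ^ t * X * (Lᵀ) ^ t‖) := by
    apply Summable.of_nonneg_of_le (fun t => norm_nonneg _) (term_norm_le hr0 hL X)
    apply Summable.mul_left
    exact summable_geometric_of_lt_one (by positivity) (by nlinarith)
  refine (norm_tsum_le_tsum_norm hsum).trans ?_
  have hg : Summable (fun t : ℕ => C ^ 2 * ‖X‖ * (r ^ 2) ^ t) := by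
    apply Summable.mul_left
    exact summable_geometric_of_lt_one (by positivity) (by nlinarith)
  refine (Summable.tsum_le_tsum (term_norm_le hr0 hL X) hsum hg).trans ?_
  rw [tsum_mul_left, tsum_geometric_of_lt_one (by positivity) (by nlinarith)]
  ring_nf
  exact le_refl _

lemma series_shift_left (hr0 : 0 ≤ r) (hr1 : r < 1) (hL : ∀ t : ℕ, ‖L ^ t‖ ≤ C * r ^ t)
    (X : Matrix (Fin d) (Fin d) ℝ) :
    (∑' t : ℕ, L ^ t * X * (Lᵀ) ^ t)
      = X + L * (∑' t : ℕ, L ^ t * X * (Lᵀ) ^ t) * Lᵀ := by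
  have hs := summable_series hr0 hr1 hL X
  conv_lhs => rw [Summable.tsum_eq_zero_add hs]
  congr 1
  · simp
  · have h1 : ∀ t : ℕ, L ^ (t+1) * X * (Lᵀ) ^ (t+1) = L * (L ^ t * X * (Lᵀ) ^ t) * Lᵀ := by
      intro t
      rw [pow_succ' L, pow_succ (Lᵀ)]
      noncomm_ring
    simp_rw [h1]
    rw [Summable.tsum_mul_right _ ((summable_series hr0 hr1 hL X).mul_left L),
      Summable.tsum_mul_left _ (summable_series hr0 hr1 hL X)]

lemma series_shift_right (hr0 : 0 ≤ r) (hr1 : r < 1) (hL : ∀ t : ℕ, ‖L ^ t‖ ≤ C * r ^ t)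
    (X : Matrix (Fin d) (Fin d) ℝ) :
    (∑' t : ℕ, L ^ t * X * (Lᵀ) ^ t)
      = X + (∑' t : ℕ, L ^ t * (L * X * Lᵀ) * (Lᵀ) ^ t) := by
  have hs := summable_series hr0 hr1 hL X
  conv_lhs => rw [Summable.tsum_eq_zero_add hs]
  congr 1
  · simp
  · have h1 : ∀ t : ℕ, L ^ (t+1) * X * (Lᵀ) ^ (t+1) = L ^ t * (L * X * Lᵀ) * (Lᵀ) ^ t := by
      intro t
      rw [pow_succ L, pow_succ' (Lᵀ)]
      noncomm_ring
    simp_rw [h1]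

lemma series_sub (hr0 : 0 ≤ r) (hr1 : r < 1) (hL : ∀ t : ℕ, ‖L ^ t‖ ≤ C * r ^ t)
    (X Y : Matrix (Fin d) (Fin d) ℝ) :
    (∑' t : ℕ, L ^ t * (X - Y) * (Lᵀ) ^ t)
      = (∑' t : ℕ, L ^ t * X * (Lᵀ) ^ t) - (∑' t : ℕ, L ^ t * Y * (Lᵀ) ^ t) := by
  have h1 : ∀ t : ℕ, L ^ t * (X - Y) * (Lᵀ) ^ t
      = L ^ t * X * (Lᵀ) ^ t - L ^ t * Y * (Lᵀ) ^ t := by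
    intro t; noncomm_ring
  simp_rw [h1]
  exact Summable.tsum_sub (summable_series hr0 hr1 hL X) (summable_series hr0 hr1 hL Y)

lemma series_symm (X : Matrix (Fin d) (Fin d) ℝ) (hX : Xᵀ = X) :
    (∑' t : ℕ, L ^ t * X * (Lᵀ) ^ t)ᵀ = ∑' t : ℕ, L ^ t * X * (Lᵀ) ^ t := by
  rw [Matrix.transpose_tsum]
  congr 1
  funext t
  simp [Matrix.transpose_mul, hX, Matrix.mul_assoc]

end withL


variable {d : ℕ}

lemma opNormSym_nonneg (L : Matrix (Fin d) (Fin d) ℝ → Matrix (Fin d) (Fin d) ℝ) :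
    0 ≤ opNormSym L := by
  apply Real.sSup_nonneg
  rintro x ⟨X, hX, hX0, rfl⟩
  exact div_nonneg (Real.sqrt_nonneg _) (Real.sqrt_nonneg _)

lemma specNorm_apply_le {Lop : Matrix (Fin d) (Fin d) ℝ → Matrix (Fin d) (Fin d) ℝ} {c : ℝ}
    (hc : 0 ≤ c) (hb : ∀ X, Xᵀ = X → specNorm (Lop X) ≤ c * specNorm X) (h0 : Lop 0 = 0)
    (X : Matrix (Fin d) (Fin d) ℝ) (hX : Xᵀ = X) :
    specNorm (Lop X) ≤ opNormSym Lop * specNorm X := by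
  by_cases hX0 : X = 0
  · subst hX0
    rw [h0, specNorm_eq_norm, norm_zero]
    simp
  · have hpos : 0 < specNorm X := by
      rw [specNorm_eq_norm]; exact norm_pos_iff.mpr hX0
    have hbdd : BddAbove {r : ℝ | ∃ Y : Matrix (Fin d) (Fin d) ℝ,
        Yᵀ = Y ∧ Y ≠ 0 ∧ r = specNorm (Lop Y) / specNorm Y} := by
      refine ⟨c, ?_⟩
      rintro x ⟨Y, hY, hY0, rfl⟩
      have hYpos : 0 < specNorm Y := by
        rw [specNorm_eq_norm]; exact norm_pos_iff.mpr hY0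
      rw [div_le_iff₀ hYpos]
      exact hb Y hY
    have hmem : specNorm (Lop X) / specNorm X ∈ {r : ℝ | ∃ Y : Matrix (Fin d) (Fin d) ℝ,
        Yᵀ = Y ∧ Y ≠ 0 ∧ r = specNorm (Lop Y) / specNorm Y} := ⟨X, hX, hX0, rfl⟩
    have := le_csSup hbdd hmem
    rw [opNormSym]
    calc specNorm (Lop X) = specNorm (Lop X) / specNorm X * specNorm X := by
          field_simp
    _ ≤ _ * specNorm X := mul_le_mul_of_nonneg_right this (le_of_lt hpos) |>.trans (le_refl _)

end Helpers

section MainProof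
open scoped Matrix.Norms.L2Operator NNReal ENNReal

/-- Operator perturbation of `𝒯_K`. -/
theorem TK_perturbation {d k : ℕ}
    (A : Matrix (Fin d) (Fin d) ℝ) (B : Matrix (Fin d) (Fin k) ℝ)
    (K K' : Matrix (Fin k) (Fin d) ℝ)
    (hK : specRad (A - B * K) < 1) (hK' : specRad (A - B * K') < 1)
    (hsmall : opNormSym (TK A B K) *
      opNormSym (fun X => FK A B K X - FK A B K' X) ≤ 1 / 2) :
    ∀ S : Matrix (Fin d) (Fin d) ℝ, Sᵀ = S →
      specNorm (TK A B K S - TK A B K' S) ≤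
        2 * opNormSym (TK A B K) *
          opNormSym (fun X => FK A B K X - FK A B K' X) * specNorm (TK A B K S) ∧
      2 * opNormSym (TK A B K) *
          opNormSym (fun X => FK A B K X - FK A B K' X) * specNorm (TK A B K S) ≤
        2 * opNormSym (TK A B K) ^ 2 *
          opNormSym (fun X => FK A B K X - FK A B K' X) * specNorm S := by
  intro S hS
  classical
  set L : Matrix (Fin d) (Fin d) ℝ := A - B * K with hLdef
  set L' : Matrix (Fin d) (Fin d) ℝ := A - B * K' with hL'def
  obtain ⟨C, r, hC, hr0, hr1, hLb⟩ := exists_geom_bound L hK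
  obtain ⟨C', r', hC', hr0', hr1', hLb'⟩ := exists_geom_bound L' hK'
  set FΔ : Matrix (Fin d) (Fin d) ℝ → Matrix (Fin d) (Fin d) ℝ :=
    fun X => FK A B K X - FK A B K' X with hFΔdef
  have hTK : ∀ X : Matrix (Fin d) (Fin d) ℝ, TK A B K X = ∑' t : ℕ, L ^ t * X * (Lᵀ) ^ t :=
    fun X => rfl
  have hTK' : ∀ X : Matrix (Fin d) (Fin d) ℝ, TK A B K' X = ∑' t : ℕ, L' ^ t * X * (L'ᵀ) ^ t :=
    fun X => rfl
  have hFΔ : ∀ X : Matrix (Fin d) (Fin d) ℝ, FΔ X = L * X * Lᵀ - L' * X * L'ᵀ := fun X => rfl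
  -- bounds for TK A B K
  have h1r : (0:ℝ) < 1 - r ^ 2 := by nlinarith
  have hcT : (0:ℝ) ≤ C ^ 2 * (1 - r ^ 2)⁻¹ := by positivity
  have hbT : ∀ X : Matrix (Fin d) (Fin d) ℝ, Xᵀ = X →
      specNorm (TK A B K X) ≤ (C ^ 2 * (1 - r ^ 2)⁻¹) * specNorm X := by
    intro X _
    rw [hTK, specNorm_eq_norm, specNorm_eq_norm]
    exact tsum_norm_le hr0 hr1 hLb X
  have h0T : TK A B K 0 = 0 := by
    rw [hTK]; simp
  -- bounds for FΔ
  have hcF : (0:ℝ) ≤ ‖L‖ ^ 2 + ‖L'‖ ^ 2 := by positivity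
  have hbF : ∀ X : Matrix (Fin d) (Fin d) ℝ, Xᵀ = X →
      specNorm (FΔ X) ≤ (‖L‖ ^ 2 + ‖L'‖ ^ 2) * specNorm X := by
    intro X _
    rw [hFΔ, specNorm_eq_norm, specNorm_eq_norm]
    have e1 : ‖L * X * Lᵀ‖ ≤ ‖L‖ * ‖X‖ * ‖L‖ := by
      calc ‖L * X * Lᵀ‖ ≤ ‖L * X‖ * ‖Lᵀ‖ := norm_mul_le _ _
      _ ≤ ‖L‖ * ‖X‖ * ‖Lᵀ‖ := mul_le_mul_of_nonneg_right (norm_mul_le _ _) (norm_nonneg _)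
      _ = ‖L‖ * ‖X‖ * ‖L‖ := by rw [l2_opNorm_transpose]
    have e2 : ‖L' * X * L'ᵀ‖ ≤ ‖L'‖ * ‖X‖ * ‖L'‖ := by
      calc ‖L' * X * L'ᵀ‖ ≤ ‖L' * X‖ * ‖L'ᵀ‖ := norm_mul_le _ _
      _ ≤ ‖L'‖ * ‖X‖ * ‖L'ᵀ‖ := mul_le_mul_of_nonneg_right (norm_mul_le _ _) (norm_nonneg _)
      _ = ‖L'‖ * ‖X‖ * ‖L'‖ := by rw [l2_opNorm_transpose]
    calc ‖L * X * Lᵀ - L' * X * L'ᵀ‖ ≤ ‖L * X * Lᵀ‖ + ‖L' * X * L'ᵀ‖ := norm_sub_le _ _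
    _ ≤ ‖L‖ * ‖X‖ * ‖L‖ + ‖L'‖ * ‖X‖ * ‖L'‖ := add_le_add e1 e2
    _ = (‖L‖ ^ 2 + ‖L'‖ ^ 2) * ‖X‖ := by ring
  have h0F : FΔ 0 = 0 := by rw [hFΔ]; simp
  -- symmetry facts
  have hYsym : (TK A B K' S)ᵀ = TK A B K' S := by
    rw [hTK']; exact series_symm (L := L') S hS
  have hFYsym : (FΔ (TK A B K' S))ᵀ = FΔ (TK A B K' S) := by
    rw [hFΔ]
    rw [Matrix.transpose_sub]
    congr 1 <;>
      simp [Matrix.transpose_mul, hYsym, Matrix.mul_assoc]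
  -- the key identity
  have hYid : TK A B K' S = S + L' * (TK A B K' S) * L'ᵀ := by
    simp only [hTK']; exact series_shift_left hr0' hr1' hLb' S
  have hSid : S = TK A B K' S - L' * (TK A B K' S) * L'ᵀ := eq_sub_of_add_eq hYid.symm
  have hTS : TK A B K S = TK A B K (TK A B K' S) - TK A B K (L' * (TK A B K' S) * L'ᵀ) := by
    conv_lhs => rw [hSid]
    simp only [hTK]
    exact series_sub hr0 hr1 hLb _ _
  have hTY : TK A B K (TK A B K' S)
      = TK A B K' S + TK A B K (L * (TK A B K' S) * Lᵀ) := by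
    simp only [hTK]
    exact series_shift_right hr0 hr1 hLb _
  have hdiff : TK A B K S - TK A B K' S = TK A B K (FΔ (TK A B K' S)) := by
    rw [hTS, hTY, hFΔ]
    simp only [hTK]
    rw [series_sub hr0 hr1 hLb]
    abel
  -- norm estimates
  have hopT : 0 ≤ opNormSym (TK A B K) := opNormSym_nonneg _
  have hopF : 0 ≤ opNormSym FΔ := opNormSym_nonneg _
  have hx2 : specNorm (TK A B K (FΔ (TK A B K' S)))
      ≤ opNormSym (TK A B K) * specNorm (FΔ (TK A B K' S)) :=
    specNorm_apply_le hcT hbT h0T _ hFYsym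
  have hx3 : specNorm (FΔ (TK A B K' S)) ≤ opNormSym FΔ * specNorm (TK A B K' S) :=
    specNorm_apply_le hcF hbF h0F _ hYsym
  have ha : specNorm (TK A B K S) ≤ opNormSym (TK A B K) * specNorm S :=
    specNorm_apply_le hcT hbT h0T S hS
  have hy : specNorm (TK A B K' S)
      ≤ specNorm (TK A B K S) + specNorm (TK A B K S - TK A B K' S) := by
    rw [specNorm_eq_norm, specNorm_eq_norm, specNorm_eq_norm]
    have heq : TK A B K' S = TK A B K S - (TK A B K S - TK A B K' S) := by abel
    conv_lhs => rw [heq]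
    exact norm_sub_le _ _
  have hxnn : 0 ≤ specNorm (TK A B K S - TK A B K' S) := Real.sqrt_nonneg _
  have hann : 0 ≤ specNorm (TK A B K S) := Real.sqrt_nonneg _
  have hSnn : 0 ≤ specNorm S := Real.sqrt_nonneg _
  have h5 : specNorm (TK A B K S - TK A B K' S)
      ≤ opNormSym (TK A B K) * (opNormSym FΔ * specNorm (TK A B K' S)) := by
    rw [hdiff]
    exact le_trans hx2 (mul_le_mul_of_nonneg_left hx3 hopT)
  constructor
  · nlinarith [mul_le_mul_of_nonneg_left hy (mul_nonneg hopT hopF),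
      mul_le_mul_of_nonneg_right hsmall hxnn]
  · nlinarith [mul_le_mul_of_nonneg_left ha (mul_nonneg (mul_nonneg (by norm_num : (0:ℝ) ≤ 2) hopT) hopF)]

end MainProof
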